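/- Let q ≥ 2 and δ ≥ 1 be integers and suppose γ is elliptic with F[γ]/F totally ramified (r = 1). Then the lower and upper bounds satisfy: q^δ + 1 ≤ ∑_{λ: |λ| ≤ δ, all parts ≥ 2} q^{δ−ℓ(λ)} + ∑_{λ: |λ| = δ−1} q^{δ−1−ℓ(λ)}; i.e., M_{δ,1}(q) ≥ N_{δ,1}(q) = q^δ + 1 for all q ≥ 2. -/

import Mathlib

open Finset

lemma pow_le_sum_pow_partitions_without_ones (q δ n : ℕ) :
    q ^ δ ≤ ∑ j ∈ range (n + 1),
      ∑ lam ∈ univ.filter (fun lam : Nat.Partition j => lam.parts.count 1 = 0),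
        q ^ (δ - lam.parts.card) := by
  have empty_partition_term :
      ∑ lam ∈ univ.filter (fun lam : Nat.Partition 0 => lam.parts.count 1 = 0),
        q ^ (δ - lam.parts.card) = q ^ δ := by
    simp
  rw [sum_range_succ', empty_partition_term]
  exact Nat.le_add_left _ _

lemma one_le_sum_pow_partitions {q : ℕ} (hq : 0 < q) (n m : ℕ) :
    1 ≤ ∑ lam : Nat.Partition n, q ^ (m - lam.parts.card) :=
  (Nat.one_le_pow _ _ hq).trans <|
    single_le_sum (f := fun lam : Nat.Partition n => q ^ (m - lam.parts.card))
      (fun _ _ => Nat.zero_le _) (mem_univ default)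

theorem lower_bound_le_upper_bound_totally_ramified_general (q δ : ℕ) (hq : 2 ≤ q) :
    q ^ δ + 1 ≤
      (∑ j ∈ Finset.range (δ + 1),
        ∑ lam ∈ Finset.univ.filter (fun lam : Nat.Partition j => lam.parts.count 1 = 0),
          q ^ (δ - lam.parts.card)) +
      ∑ lam : Nat.Partition (δ - 1), q ^ (δ - 1 - lam.parts.card) :=
  Nat.add_le_add (pow_le_sum_pow_partitions_without_ones q δ δ)
    (one_le_sum_pow_partitions (by omega) (δ - 1) (δ - 1))

/-- For `q ≥ 2` and `δ ≥ 1` (the elliptic, totally ramified case `r = 1`):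
`q^δ + 1 ≤ ∑_{|λ| ≤ δ, all parts ≥ 2} q^{δ−ℓ(λ)} + ∑_{|λ| = δ−1} q^{δ−1−ℓ(λ)}`,
i.e. `N_{δ,1}(q) ≤ M_{δ,1}(q)`.  The sums run over partitions; "all parts ≥ 2" means
`m₁(λ) = 0`, and `ℓ(λ)` is the number of parts. -/
theorem lower_bound_le_upper_bound_totally_ramified (q δ : ℕ) (hq : 2 ≤ q) (hδ : 1 ≤ δ) :
    q ^ δ + 1 ≤
      (∑ j ∈ Finset.range (δ + 1),
        ∑ lam ∈ Finset.univ.filter (fun lam : Nat.Partition j => lam.parts.count 1 = 0),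
          q ^ (δ - lam.parts.card)) +
      ∑ lam : Nat.Partition (δ - 1), q ^ (δ - 1 - lam.parts.card) :=
  lower_bound_le_upper_bound_totally_ramified_general q δ hq
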